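/- Let V be a non-singular orthogonal geometry over a field F of characteristic ≠ 2 and C(V) its universal Clifford algebra. Let A = [[a,b],[c,d]] ∈ M₂(C(V)) satisfy ba* − ab* = cd* − dc* = 0 and a*c − c*a = d*b − b*d = 0. If ad* − bc* = d*a − b*c = λ·1 for some λ ∈ F^×, then A is invertible in M₂(C(V)) with A⁻¹ = λ⁻¹·[[d*, −b*],[−c*, a*]]. -/
import Mathlib


open CliffordAlgebra

/-- Invertibility criterion in `M₂(C(V))`: if `ba* - ab* = cd* - dc* = 0`,
`a*c - c*a = d*b - b*d = 0` and `ad* - bc* = d*a - b*c = λ·1` with `λ ∈ F^×`,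
then `A = [[a,b],[c,d]]` is invertible with inverse `λ⁻¹·[[d*,-b*],[-c*,a*]]`.
(Here `x* = reverse x`.) -/
theorem stmt_10 {F : Type*} [Field F] (hchar : (2 : F) ≠ 0)
    {V : Type*} [AddCommGroup V] [Module F V] [FiniteDimensional F V]
    (S : LinearMap.BilinForm F V) (hS : ∀ x y, S x y = S y x)
    (hnd : ∀ x : V, (∀ y : V, S x y = 0) → x = 0)
    (Q : QuadraticForm F V) (hQ : ∀ v, Q v = -(S v v))
    (a b c d : CliffordAlgebra Q)
    (h1 : b * reverse a - a * reverse b = 0)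
    (h2 : c * reverse d - d * reverse c = 0)
    (h3 : reverse a * c - reverse c * a = 0)
    (h4 : reverse d * b - reverse b * d = 0)
    (l : F) (hl : l ≠ 0)
    (h5 : a * reverse d - b * reverse c = algebraMap F (CliffordAlgebra Q) l)
    (h6 : reverse d * a - reverse b * c = algebraMap F (CliffordAlgebra Q) l) :
    !![a, b; c, d] * (l⁻¹ • !![reverse d, -reverse b; -reverse c, reverse a]) = 1 ∧
    (l⁻¹ • !![reverse d, -reverse b; -reverse c, reverse a]) * !![a, b; c, d] = 1 := by
  have h5' : d * reverse a - c * reverse b = algebraMap F (CliffordAlgebra Q) l := by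
    have := congrArg (reverse (Q := Q)) h5
    simpa [map_sub, reverse.map_mul, reverse_reverse] using this
  have h6' : reverse a * d - reverse c * b = algebraMap F (CliffordAlgebra Q) l := by
    have := congrArg (reverse (Q := Q)) h6
    simpa [map_sub, reverse.map_mul, reverse_reverse] using this
  have hsm : ∀ M : Matrix (Fin 2) (Fin 2) (CliffordAlgebra Q),
      M = algebraMap F (CliffordAlgebra Q) l • 1 → l⁻¹ • M = 1 := by
    intro M hM
    rw [hM, algebraMap_smul, smul_smul, inv_mul_cancel₀ hl, one_smul]
  constructor
  · rw [Matrix.mul_smul]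
    apply hsm
    rw [Matrix.mul_fin_two]
    ext i j
    fin_cases i <;> fin_cases j <;>
        simp [Matrix.one_apply, mul_neg, ← sub_eq_add_neg] <;>
      first
      | (rw [neg_add_eq_sub]; assumption)
      | assumption
  · rw [Matrix.smul_mul]
    apply hsm
    rw [Matrix.mul_fin_two]
    ext i j
    fin_cases i <;> fin_cases j <;>
        simp [Matrix.one_apply, mul_neg, neg_mul, ← sub_eq_add_neg] <;>
      first
      | (rw [neg_add_eq_sub]; assumption)
      | assumption
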